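/- Let k be an integer, D ⊆ {0,1}^{k+1} with |D| ≥ 2^{k/2}, and f : {0,1}^{k+1} → {0,1}. For b ∈ {0,1}^k, let U_{[b],D} be the uniform distribution on D ∩ {(x, x·b) : x ∈ {0,1}^k} and U_{k+1,D} the uniform distribution on D (if the first set is empty take U_{[b],D} uniform on D). Then E_{b ∼ U_k}[ ‖f(U_{[b],D}) − f(U_{k+1,D})‖ ] ≤ 2^{−k/9} (for all sufficiently large k). -/

import Mathlib

open Finset

def ip {k : ℕ} (x b : Fin k → Bool) : Bool :=
  decide ((univ.filter (fun i => x i && b i)).card % 2 = 1)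

/-!
Write `D_b` for the points of `D` on the graph of `x ↦ x·b`, and `σ_b(z) = ±1` according as
`z ∈ D_b`. For `z ≠ w` the signs are never positively correlated over `b`: with equal first
coordinates `σ_b(z) σ_b(w) = -1`, and otherwise the product is, up to sign, the nontrivial
character `b ↦ (-1)^((x ⊕ y)·b)`, which sums to `0`. Hence for every weight `0 ≤ u ≤ 1` the
deviation `∑_{D_b} u - ½ ∑_D u = ½ ∑_D u σ_b` has mean square at most `|D| / 4` over `b`, and by
Cauchy–Schwarz mean absolute value at most `√|D| / 2`. Applied to `u = f` and `u = 1` this controls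
the numerator and the denominator of the mean of `f` on `D_b`, so the average distance is at most
`4 / √|D| ≤ 2^(-k/4 + 2)`.
-/

theorem abs_div_sub_div_le {s a S N : ℝ} (ha0 : 0 < a) (hs0 : 0 ≤ s) (hsa : s ≤ a)
    (hN0 : 0 < N) (hS0 : 0 ≤ S) (hSN : S ≤ N) :
    |s / a - S / N| ≤ 4 / N * (|s - S / 2| + |a - N / 2|) := by
  -- A denominator below `N / 4` is itself a deviation of size at least `N / 4`, while the
  -- difference of two means in `[0, 1]` is at most `1`.
  by_cases hsmall : a < N / 4
  · have hfar : N / 4 ≤ |a - N / 2| := by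
      rw [abs_sub_comm, abs_of_pos (by linarith)]
      linarith
    have hle_one : |s / a - S / N| ≤ 1 := by
      rw [abs_sub_le_iff]
      constructor <;> linarith [div_le_one_of_le₀ hsa ha0.le, div_le_one_of_le₀ hSN hN0.le,
        div_nonneg hs0 ha0.le, div_nonneg hS0 hN0.le]
    calc |s / a - S / N| ≤ 1 := hle_one
      _ = 4 / N * (N / 4) := by field_simp
      _ ≤ 4 / N * (|s - S / 2| + |a - N / 2|) := by gcongr; linarith [abs_nonneg (s - S / 2)]
  · push Not at hsmall
    have hsplit : s / a - S / N = (N * (s - S / 2) - S * (a - N / 2)) / (N * a) := by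
      field_simp
      ring
    have hnum : |N * (s - S / 2) - S * (a - N / 2)| ≤ N * (|s - S / 2| + |a - N / 2|) := by
      calc |N * (s - S / 2) - S * (a - N / 2)|
          ≤ N * |s - S / 2| + S * |a - N / 2| := by
            refine (abs_sub _ _).trans_eq ?_
            rw [abs_mul, abs_mul, abs_of_pos hN0, abs_of_nonneg hS0]
        _ ≤ N * (|s - S / 2| + |a - N / 2|) := by
            nlinarith [abs_nonneg (a - N / 2)]
    rw [hsplit, abs_div, abs_of_pos (mul_pos hN0 ha0), div_le_iff₀ (by positivity)]
    calc |N * (s - S / 2) - S * (a - N / 2)| ≤ N * (|s - S / 2| + |a - N / 2|) := hnum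
      _ = 4 / N * (|s - S / 2| + |a - N / 2|) * (N * (N / 4)) := by field_simp
      _ ≤ 4 / N * (|s - S / 2| + |a - N / 2|) * (N * a) := by gcongr

section Deviation

variable {ι α : Type*}

theorem sum_filter_sub_half_sum (s : Finset ι) (p : ι → Prop) [DecidablePred p] (u : ι → ℝ) :
    ∑ z ∈ s.filter p, u z - (∑ z ∈ s, u z) / 2 =
      (∑ z ∈ s, u z * if p z then 1 else -1) / 2 := by
  rw [sum_filter, sum_div, sum_div, ← sum_sub_distrib]
  refine sum_congr rfl fun z _ => ?_
  split <;> ring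

theorem sum_sq_sum_mul_le [Fintype α] [DecidableEq ι] (s : Finset ι) (σ : α → ι → ℝ)
    (hσ : ∀ a z, σ a z ^ 2 ≤ 1) (hcorr : ∀ z w, z ≠ w → ∑ a, σ a z * σ a w ≤ 0)
    (u : ι → ℝ) (hu0 : ∀ z, 0 ≤ u z) (hu1 : ∀ z, u z ≤ 1) :
    ∑ a, (∑ z ∈ s, u z * σ a z) ^ 2 ≤ Fintype.card α * s.card := by
  have expand : ∑ a, (∑ z ∈ s, u z * σ a z) ^ 2 =
      ∑ z ∈ s, ∑ w ∈ s, u z * u w * ∑ a, σ a z * σ a w := by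
    calc ∑ a, (∑ z ∈ s, u z * σ a z) ^ 2
        = ∑ a, ∑ z ∈ s, ∑ w ∈ s, u z * u w * (σ a z * σ a w) := by
          refine sum_congr rfl fun a _ => ?_
          rw [sq, sum_mul_sum]
          exact sum_congr rfl fun z _ => sum_congr rfl fun w _ => by ring
      _ = ∑ z ∈ s, ∑ w ∈ s, u z * u w * ∑ a, σ a z * σ a w := by
          rw [sum_comm]
          refine sum_congr rfl fun z _ => ?_
          rw [sum_comm]
          exact sum_congr rfl fun w _ => (mul_sum _ _ _).symm
  have diagonal (z : ι) : u z * u z * ∑ a, σ a z * σ a z ≤ Fintype.card α := by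
    have hσσ : ∑ a, σ a z * σ a z ≤ Fintype.card α := by
      simpa [← sq] using sum_le_sum fun a (_ : a ∈ univ) => hσ a z
    calc u z * u z * ∑ a, σ a z * σ a z ≤ 1 * Fintype.card α :=
          mul_le_mul (mul_le_one₀ (hu1 z) (hu0 z) (hu1 z)) hσσ
            (sum_nonneg fun a _ => mul_self_nonneg _) zero_le_one
      _ = Fintype.card α := one_mul _
  have row (z : ι) (hz : z ∈ s) : ∑ w ∈ s, u z * u w * ∑ a, σ a z * σ a w ≤ Fintype.card α := by
    rw [← sum_erase_add s _ hz]
    have off_diagonal : ∑ w ∈ s.erase z, u z * u w * ∑ a, σ a z * σ a w ≤ 0 :=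
      sum_nonpos fun w hw => mul_nonpos_of_nonneg_of_nonpos
        (mul_nonneg (hu0 z) (hu0 w)) (hcorr z w (ne_of_mem_erase hw).symm)
    linarith [diagonal z]
  calc ∑ a, (∑ z ∈ s, u z * σ a z) ^ 2
      = ∑ z ∈ s, ∑ w ∈ s, u z * u w * ∑ a, σ a z * σ a w := expand
    _ ≤ ∑ _z ∈ s, (Fintype.card α : ℝ) := sum_le_sum row
    _ = Fintype.card α * s.card := by rw [sum_const, nsmul_eq_mul, mul_comm]

theorem sum_abs_le_sqrt_card_mul_sum_sq [Fintype α] (X : α → ℝ) :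
    ∑ a, |X a| ≤ √(Fintype.card α * ∑ a, X a ^ 2) := by
  have h := sq_sum_le_card_mul_sum_sq (s := (univ : Finset α)) (f := fun a => |X a|)
  simp only [sq_abs, card_univ] at h
  exact Real.le_sqrt_of_sq_le h

theorem abs_mean_filter_sub_mean_le (s : Finset ι) (p : ι → Prop) [DecidablePred p]
    (u : ι → ℝ) (hu0 : ∀ z, 0 ≤ u z) (hu1 : ∀ z, u z ≤ 1) (hs : (s.filter p).Nonempty) :
    |(∑ z ∈ s.filter p, u z) / (s.filter p).card - (∑ z ∈ s, u z) / s.card|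
      ≤ 4 / s.card * (|∑ z ∈ s.filter p, u z - (∑ z ∈ s, u z) / 2|
        + |((s.filter p).card : ℝ) - s.card / 2|) := by
  have sum_le_card (t : Finset ι) : ∑ z ∈ t, u z ≤ t.card := by
    simpa using sum_le_sum fun z (_ : z ∈ t) => hu1 z
  refine abs_div_sub_div_le (by exact_mod_cast hs.card_pos) (sum_nonneg fun z _ => hu0 z)
    (sum_le_card _) ?_ (sum_nonneg fun z _ => hu0 z) (sum_le_card s)
  exact_mod_cast (hs.mono (filter_subset p s)).card_pos

end Deviation

namespace ParityCharacter

variable {k : ℕ}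

noncomputable def parityChar (x b : Fin k → Bool) : ℝ :=
  (-1) ^ (univ.filter (fun i => x i && b i)).card

noncomputable def agreeSign (b : Fin k → Bool) (z : (Fin k → Bool) × Bool) : ℝ :=
  if z.2 = ip z.1 b then 1 else -1

theorem parityChar_eq_prod (x b : Fin k → Bool) :
    parityChar x b = ∏ i, (-1 : ℝ) ^ (if x i && b i then 1 else 0) := by
  rw [parityChar, prod_pow_eq_pow_sum, card_filter]

theorem parityChar_eq_ite (x b : Fin k → Bool) :
    parityChar x b = if ip x b then -1 else 1 := by
  rcases Nat.even_or_odd (univ.filter (fun i => x i && b i)).card with h | h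
  · rw [parityChar, h.neg_one_pow, ip, Nat.even_iff.mp h]
    simp
  · rw [parityChar, h.neg_one_pow, ip, Nat.odd_iff.mp h]
    simp

theorem parityChar_mul (x y b : Fin k → Bool) :
    parityChar x b * parityChar y b = parityChar (fun i => xor (x i) (y i)) b := by
  simp only [parityChar_eq_prod, ← prod_mul_distrib]
  refine prod_congr rfl fun i _ => ?_
  cases x i <;> cases y i <;> cases b i <;> norm_num

theorem sum_parityChar_eq_zero {v : Fin k → Bool} {i₀ : Fin k} (hi₀ : v i₀ = true) :
    ∑ b, parityChar v b = 0 := by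
  have hfactor : ∑ b, parityChar v b = ∏ i, ∑ β : Bool, (-1 : ℝ) ^ (if v i && β then 1 else 0) := by
    rw [Fintype.prod_sum]
    exact sum_congr rfl fun b _ => parityChar_eq_prod v b
  rw [hfactor]
  exact prod_eq_zero (mem_univ i₀) (by simp [hi₀])

theorem agreeSign_eq (b : Fin k → Bool) (z : (Fin k → Bool) × Bool) :
    agreeSign b z = (if z.2 then -1 else 1) * parityChar z.1 b := by
  rw [parityChar_eq_ite, agreeSign]
  cases z.2 <;> cases ip z.1 b <;> norm_num

theorem agreeSign_sq (b : Fin k → Bool) (z : (Fin k → Bool) × Bool) : agreeSign b z ^ 2 ≤ 1 := by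
  unfold agreeSign; split <;> norm_num

theorem sum_agreeSign_mul_nonpos {z w : (Fin k → Bool) × Bool} (hzw : z ≠ w) :
    ∑ b, agreeSign b z * agreeSign b w ≤ 0 := by
  have hprod (b : Fin k → Bool) : agreeSign b z * agreeSign b w =
      ((if z.2 then -1 else 1) * (if w.2 then -1 else 1)) *
        parityChar (fun i => xor (z.1 i) (w.1 i)) b := by
    rw [agreeSign_eq, agreeSign_eq, ← parityChar_mul]
    ring
  by_cases hx : z.1 = w.1
  · have hc : z.2 ≠ w.2 := fun hc => hzw (Prod.ext hx hc)
    have hxor : (fun i => xor (z.1 i) (w.1 i)) = fun _ => false := by simp [hx]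
    have hsigns : ((if z.2 then -1 else 1) * (if w.2 then -1 else 1) : ℝ) = -1 := by
      revert hc; cases z.2 <;> cases w.2 <;> norm_num
    simp only [hprod, hxor, hsigns]
    simp [parityChar]
  · obtain ⟨i₀, hi₀⟩ : ∃ i, xor (z.1 i) (w.1 i) = true := by
      by_contra! h
      exact hx (funext fun i => by simpa using h i)
    rw [sum_congr rfl fun b _ => hprod b, ← mul_sum,
      sum_parityChar_eq_zero hi₀, mul_zero]

end ParityCharacter

open ParityCharacter in
theorem sum_abs_sum_filter_graph_sub_half_le {k : ℕ} (D : Finset ((Fin k → Bool) × Bool))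
    (u : (Fin k → Bool) × Bool → ℝ) (hu0 : ∀ z, 0 ≤ u z) (hu1 : ∀ z, u z ≤ 1) :
    ∑ b : Fin k → Bool,
        |∑ z ∈ D.filter (fun z => z.2 = ip z.1 b), u z - (∑ z ∈ D, u z) / 2|
      ≤ 2 ^ k * √D.card / 2 := by
  have hcard : (Fintype.card (Fin k → Bool) : ℝ) = 2 ^ k := by simp
  have second_moment := sum_sq_sum_mul_le D agreeSign agreeSign_sq
    (fun _ _ => sum_agreeSign_mul_nonpos) u hu0 hu1
  rw [hcard] at second_moment
  calc ∑ b : Fin k → Bool,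
        |∑ z ∈ D.filter (fun z => z.2 = ip z.1 b), u z - (∑ z ∈ D, u z) / 2|
      = ∑ b : Fin k → Bool, |∑ z ∈ D, u z * agreeSign b z| / 2 := by
        refine sum_congr rfl fun b _ => ?_
        rw [sum_filter_sub_half_sum, abs_div, abs_two]
        rfl
    _ ≤ √(2 ^ k * (2 ^ k * D.card)) / 2 := by
        rw [← sum_div]
        gcongr
        refine (sum_abs_le_sqrt_card_mul_sum_sq _).trans ?_
        rw [hcard]
        gcongr
    _ = 2 ^ k * √D.card / 2 := by
        rw [← mul_assoc, Real.sqrt_mul (by positivity), Real.sqrt_mul_self (by positivity)]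

theorem four_div_sqrt_le_two_rpow {k : ℕ} (hk : 16 ≤ k) {N : ℝ} (hN : (2 : ℝ) ^ ((k : ℝ) / 2) ≤ N) :
    4 / √N ≤ (2 : ℝ) ^ (-(k : ℝ) / 9) := by
  have hkR : (16 : ℝ) ≤ k := by exact_mod_cast hk
  have hsqrt : (2 : ℝ) ^ ((k : ℝ) / 4) ≤ √N := by
    calc (2 : ℝ) ^ ((k : ℝ) / 4) = √((2 : ℝ) ^ ((k : ℝ) / 2)) := by
          rw [Real.sqrt_eq_rpow, ← Real.rpow_mul (by norm_num)]
          ring_nf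
      _ ≤ √N := Real.sqrt_le_sqrt hN
  calc 4 / √N ≤ 4 / (2 : ℝ) ^ ((k : ℝ) / 4) := by gcongr
    _ = (2 : ℝ) ^ (2 - (k : ℝ) / 4) := by
        rw [Real.rpow_sub two_pos]
        norm_num
    _ ≤ (2 : ℝ) ^ (-(k : ℝ) / 9) :=
        Real.rpow_le_rpow_of_exponent_le one_le_two (by linarith)

theorem stmt8 : ∃ K : ℕ, ∀ k ≥ K, ∀ D : Finset ((Fin k → Bool) × Bool),
    (2:ℝ) ^ ((k:ℝ)/2) ≤ D.card →
    ∀ f : ((Fin k → Bool) × Bool) → Bool,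
    (1 / (2:ℝ) ^ k) * ∑ b : Fin k → Bool,
      (if (D.filter (fun z => z.2 = ip z.1 b)).Nonempty then
        |(∑ z ∈ D.filter (fun z => z.2 = ip z.1 b), if f z then (1:ℝ) else 0) /
            (D.filter (fun z => z.2 = ip z.1 b)).card -
          (∑ z ∈ D, if f z then (1:ℝ) else 0) / D.card|
      else 0)
    ≤ (2:ℝ) ^ (-(k:ℝ)/9) := by
  refine ⟨16, fun k hk D hD f => ?_⟩
  set u : (Fin k → Bool) × Bool → ℝ := fun z => if f z then 1 else 0
  set N : ℝ := (D.card : ℝ)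
  set Db : (Fin k → Bool) → Finset ((Fin k → Bool) × Bool) :=
    fun b => D.filter (fun z => z.2 = ip z.1 b)
  have hu0 (z) : 0 ≤ u z := by simp only [u]; split <;> norm_num
  have hu1 (z) : u z ≤ 1 := by simp only [u]; split <;> norm_num
  have hN : 0 < N := lt_of_lt_of_le (by positivity) hD
  have hterm (b : Fin k → Bool) :
      (if (Db b).Nonempty then |(∑ z ∈ Db b, u z) / (Db b).card - (∑ z ∈ D, u z) / N| else 0)
        ≤ 4 / N * (|∑ z ∈ Db b, u z - (∑ z ∈ D, u z) / 2| + |((Db b).card : ℝ) - N / 2|) := by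
    split_ifs with hne
    · exact abs_mean_filter_sub_mean_le D _ u hu0 hu1 hne
    · positivity
  have hdev_weight := sum_abs_sum_filter_graph_sub_half_le D u hu0 hu1
  have hdev_card : ∑ b, |((Db b).card : ℝ) - N / 2| ≤ 2 ^ k * √N / 2 := by
    simpa using sum_abs_sum_filter_graph_sub_half_le D (fun _ => 1) (by simp) (by simp)
  calc (1 / (2:ℝ) ^ k) * ∑ b : Fin k → Bool, _
      ≤ 1 / 2 ^ k * (4 / N * (2 ^ k * √N / 2 + 2 ^ k * √N / 2)) := by
        gcongr
        refine (sum_le_sum fun b _ => hterm b).trans ?_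
        rw [← mul_sum, sum_add_distrib]
        gcongr
    _ = 4 / √N := by
        have hsqrt : √N * √N = N := Real.mul_self_sqrt hN.le
        field_simp
        linear_combination 2 * hsqrt
    _ ≤ (2:ℝ) ^ (-(k:ℝ)/9) := four_div_sqrt_le_two_rpow hk hD
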